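/- Let g ∈ Mon(X). For all x ≤ y in Fact(G,g,I), the interval [x,y] = {z ∈ Fact(G,g,I) : x ≤ z ≤ y} is order-isomorphic to the poset of all subsets of some finite set, ordered by inclusion; that is, every interval of Fact(G,g,I) is isomorphic to a Boolean lattice. -/

import Mathlib

noncomputable def wlen {G : Type*} [Group G] (X : Set G) (g : G) : ℕ :=
  sInf {n | ∃ l : List G, l.length = n ∧ (∀ x ∈ l, x ∈ X) ∧ l.prod = g}

def IsLinFact {G : Type*} [Group G] (X : Set G) (g : G) (p : G × List G × G) : Prop :=
  p.1 ∈ Submonoid.closure X ∧ p.2.2 ∈ Submonoid.closure X ∧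
    (∀ a ∈ p.2.1, a ∈ Submonoid.closure X ∧ a ≠ 1) ∧
    p.1 * p.2.1.prod * p.2.2 = g ∧
    wlen X p.1 + (p.2.1.map (wlen X)).sum + wlen X p.2.2 = wlen X g

inductive MergeStep {G : Type*} [Group G] : G × List G × G → G × List G × G → Prop
  | left (xL a : G) (l : List G) (xR : G) :
      MergeStep (xL * a, l, xR) (xL, a :: l, xR)
  | mid (xL : G) (l₁ : List G) (a b : G) (l₂ : List G) (xR : G) :
      MergeStep (xL, l₁ ++ (a * b) :: l₂, xR) (xL, l₁ ++ a :: b :: l₂, xR)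
  | right (xL : G) (l : List G) (a xR : G) :
      MergeStep (xL, l, a * xR) (xL, l ++ [a], xR)

/-- The poset `Fact(G,g,I)` of linear factorizations of `g`, ordered by merges. -/
abbrev FactI {G : Type*} [Group G] (X : Set G) (g : G) := {p : G × List G × G // IsLinFact X g p}

instance {G : Type*} [Group G] (X : Set G) (g : G) : LE (FactI X g) :=
  ⟨fun a b => Relation.ReflTransGen MergeStep a.val b.val⟩

/-! Flatten a factorization `(x_L, x_1, …, x_k, x_R)` to the list `x_L, x_1, …, x_k, x_R`, with
`k + 1` gaps between consecutive entries. Merging closes gaps, so the factorizations below `y` are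
exactly the lists obtained from `y` by closing some gaps, and `z ≤ z'` iff the gaps open in `z` are
open in `z'`. Distinct sets of open gaps give distinct lists: `ℓ` is additive along a linear
factorization and the `x_i` are nontrivial, so no nonempty run of middle factors multiplies to `1`.
Hence `[x, y]` is the Boolean lattice of sets of gaps between those open in `x` and all of them. -/

section Monoid

variable {M : Type*} [Monoid M]

def ListMergeStep (v w : List M) : Prop :=
  ∃ u a b t, w = u ++ a :: b :: t ∧ v = u ++ (a * b) :: t

theorem ListMergeStep.length_eq {v w : List M} (h : ListMergeStep v w) :
    w.length = v.length + 1 := by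
  obtain ⟨u, a, b, t, rfl, rfl⟩ := h
  simp only [List.length_append, List.length_cons]
  omega

theorem ListMergeStep.prod_eq {v w : List M} (h : ListMergeStep v w) : v.prod = w.prod := by
  obtain ⟨u, a, b, t, rfl, rfl⟩ := h
  simp [mul_assoc]

theorem ListMergeStep.cons {v w : List M} (c : M) (h : ListMergeStep v w) :
    ListMergeStep (c :: v) (c :: w) := by
  obtain ⟨u, a, b, t, rfl, rfl⟩ := h
  exact ⟨c :: u, a, b, t, rfl, rfl⟩

theorem Relation.ReflTransGen.length_le_of_listMergeStep {v w : List M}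
    (h : Relation.ReflTransGen ListMergeStep v w) : v.length ≤ w.length := by
  induction h with
  | refl => rfl
  | tail _ hstep ih => rw [hstep.length_eq]; omega

/-- `mergeGaps S k a xs` is the list `a :: xs` in which the gap before `xs[i]`, numbered `k + i`,
stays open if `k + i ∈ S` and is closed, multiplying its two neighbours, otherwise. -/
def mergeGaps (S : Finset ℕ) : ℕ → M → List M → List M
  | _, a, [] => [a]
  | k, a, x :: xs => if k ∈ S then a :: mergeGaps S (k + 1) x xs else mergeGaps S (k + 1) (a * x) xs

variable {S T : Finset ℕ}

theorem mergeGaps_ne_nil (k : ℕ) (a : M) (xs : List M) : mergeGaps S k a xs ≠ [] := by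
  induction xs generalizing k a with
  | nil => simp [mergeGaps]
  | cons x xs ih => unfold mergeGaps; split_ifs <;> simp [ih]

theorem mergeGaps_mul_left (k : ℕ) (c a : M) (xs : List M) :
    mergeGaps S k (c * a) xs = (mergeGaps S k a xs).modifyHead (c * ·) := by
  induction xs generalizing k a with
  | nil => simp [mergeGaps]
  | cons x xs ih => unfold mergeGaps; split_ifs <;> simp [ih, mul_assoc]

theorem mergeGaps_of_forall_mem {k : ℕ} {xs : List M}
    (h : ∀ i, k ≤ i → i < k + xs.length → i ∈ S) (a : M) : mergeGaps S k a xs = a :: xs := by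
  induction xs generalizing k a with
  | nil => simp [mergeGaps]
  | cons x xs ih =>
    simp only [List.length_cons] at h
    rw [mergeGaps, if_pos (h k le_rfl (by omega)),
      ih (fun i hi hi' => h i (by omega) (by omega))]

theorem mergeGaps_erase_of_lt {i k : ℕ} (hik : i < k) (a : M) (xs : List M) :
    mergeGaps (S.erase i) k a xs = mergeGaps S k a xs := by
  induction xs generalizing k a with
  | nil => simp [mergeGaps]
  | cons x xs ih =>
    simp only [mergeGaps, Finset.mem_erase, hik.ne', ne_eq, not_false_eq_true, true_and,
      ih (Nat.lt_succ_of_lt hik)]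

theorem listMergeStep_mergeGaps_mul (k : ℕ) (a b : M) (xs : List M) :
    ListMergeStep (mergeGaps S k (a * b) xs) (a :: mergeGaps S k b xs) := by
  obtain ⟨c, t, hct⟩ := List.exists_cons_of_ne_nil (mergeGaps_ne_nil (S := S) k b xs)
  rw [mergeGaps_mul_left, hct]
  exact ⟨[], a, c, t, rfl, rfl⟩

theorem mergeGaps_mono (hST : S ⊆ T) (k : ℕ) (a : M) (xs : List M) :
    Relation.ReflTransGen ListMergeStep (mergeGaps S k a xs) (mergeGaps T k a xs) := by
  induction xs generalizing k a with
  | nil => exact .refl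
  | cons x xs ih =>
    simp only [mergeGaps]
    by_cases hS : k ∈ S
    · rw [if_pos hS, if_pos (hST hS)]
      exact (ih (k + 1) x).lift _ fun _ _ h => h.cons a
    by_cases hT : k ∈ T
    · rw [if_neg hS, if_pos hT]
      exact .head (listMergeStep_mergeGaps_mul _ a x xs)
        ((ih (k + 1) x).lift _ fun _ _ h => h.cons a)
    · rw [if_neg hS, if_neg hT]
      exact ih (k + 1) (a * x)

theorem exists_eq_mergeGaps_erase_of_listMergeStep {v : List M} {k : ℕ} {a : M} {xs : List M}
    (h : ListMergeStep v (mergeGaps T k a xs)) :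
    ∃ i ∈ T, k ≤ i ∧ v = mergeGaps (T.erase i) k a xs := by
  induction xs generalizing v k a with
  | nil =>
    obtain ⟨u, b, c, t, hw, -⟩ := h
    have := congrArg List.length hw
    simp only [mergeGaps, List.length_cons, List.length_nil, List.length_append] at this
    omega
  | cons x xs ih =>
    by_cases hk : k ∈ T
    · rw [mergeGaps, if_pos hk] at h
      obtain ⟨u, b, c, t, hw, rfl⟩ := h
      rcases u with _ | ⟨d, u⟩
      · obtain ⟨rfl, hxs⟩ := List.cons.inj hw
        refine ⟨k, hk, le_rfl, ?_⟩
        rw [mergeGaps, if_neg (Finset.notMem_erase k T), mergeGaps_erase_of_lt (Nat.lt_add_one k),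
          mergeGaps_mul_left, hxs]
        rfl
      · obtain ⟨rfl, hxs⟩ := List.cons.inj hw
        obtain ⟨i, hi, hki, hv⟩ := ih ⟨u, b, c, t, hxs, rfl⟩
        refine ⟨i, hi, by omega, ?_⟩
        rw [mergeGaps, if_pos (Finset.mem_erase.2 ⟨by omega, hk⟩), ← hv]
        rfl
    · rw [mergeGaps, if_neg hk] at h
      obtain ⟨i, hi, hki, hv⟩ := ih h
      refine ⟨i, hi, by omega, ?_⟩
      rw [mergeGaps, if_neg fun h' => hk (Finset.mem_of_mem_erase h'), hv]

theorem exists_subset_of_reflTransGen_mergeGaps {v : List M} {k : ℕ} {a : M} {xs : List M}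
    (h : Relation.ReflTransGen ListMergeStep v (mergeGaps T k a xs)) :
    ∃ S ⊆ T, v = mergeGaps S k a xs := by
  induction h using Relation.ReflTransGen.head_induction_on with
  | refl => exact ⟨T, subset_rfl, rfl⟩
  | head hstep _ ih =>
    obtain ⟨S, hST, rfl⟩ := ih
    obtain ⟨i, -, -, rfl⟩ := exists_eq_mergeGaps_erase_of_listMergeStep hstep
    exact ⟨S.erase i, (Finset.erase_subset i S).trans hST, rfl⟩

theorem exists_eq_mul_prod_take_of_mergeGaps_eq_cons {k : ℕ} {a c : M} {xs r : List M}
    (h : mergeGaps S k a xs = c :: r) (hr : r ≠ []) :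
    ∃ j < xs.length, c = a * (xs.take j).prod := by
  induction xs generalizing k a with
  | nil =>
    simp only [mergeGaps, List.cons.injEq] at h
    exact (hr h.2.symm).elim
  | cons x xs ih =>
    by_cases hk : k ∈ S
    · rw [mergeGaps, if_pos hk] at h
      exact ⟨0, by simp, by simp [(List.cons.inj h).1]⟩
    · rw [mergeGaps, if_neg hk] at h
      obtain ⟨j, hj, rfl⟩ := ih h
      exact ⟨j + 1, by simpa using hj, by simp [mul_assoc]⟩

end Monoid

section LeftCancelMonoid

variable {M : Type*} [LeftCancelMonoid M] {S T : Finset ℕ}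

theorem mergeGaps_cons_ne {k : ℕ} {a x : M} {xs : List M}
    (hxs : ∀ v : List M, v ≠ [] → v <:+: (x :: xs).dropLast → v.prod ≠ 1)
    (hS : k ∈ S) (hT : k ∉ T) : mergeGaps S k a (x :: xs) ≠ mergeGaps T k a (x :: xs) := by
  intro h
  rw [mergeGaps, if_pos hS, mergeGaps, if_neg hT] at h
  obtain ⟨j, hj, hxj⟩ :=
    exists_eq_mul_prod_take_of_mergeGaps_eq_cons h.symm (mergeGaps_ne_nil _ x xs)
  have hprefix : x :: xs.take j <+: (x :: xs).dropLast := by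
    rw [List.dropLast_cons_of_ne_nil (List.ne_nil_of_length_pos (by omega)),
      List.cons_prefix_cons, List.dropLast_eq_take]
    exact ⟨rfl, List.take_prefix_take_left (by omega)⟩
  refine hxs _ (List.cons_ne_nil _ _) hprefix.isInfix (mul_left_cancel (a := a) ?_)
  simpa [mul_assoc] using hxj.symm

theorem mem_iff_mem_of_mergeGaps_eq {k : ℕ} {a : M} {xs : List M}
    (hxs : ∀ v : List M, v ≠ [] → v <:+: xs.dropLast → v.prod ≠ 1)
    (h : mergeGaps S k a xs = mergeGaps T k a xs) :
    ∀ i, k ≤ i → i < k + xs.length → (i ∈ S ↔ i ∈ T) := by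
  induction xs generalizing k a with
  | nil => intro i hki hi; simp only [List.length_nil, add_zero] at hi; omega
  | cons x xs ih =>
    have hxs' : ∀ v : List M, v ≠ [] → v <:+: xs.dropLast → v.prod ≠ 1 := by
      refine fun v hv hinf => hxs v hv (hinf.trans ?_)
      rcases eq_or_ne xs [] with rfl | hne
      · simp
      · rw [List.dropLast_cons_of_ne_nil hne]
        exact (List.suffix_cons x _).isInfix
    have hk : k ∈ S ↔ k ∈ T := by
      by_cases hS : k ∈ S <;> by_cases hT : k ∈ T
      · exact iff_of_true hS hT
      · exact (mergeGaps_cons_ne hxs hS hT h).elim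
      · exact (mergeGaps_cons_ne hxs hT hS h.symm).elim
      · exact iff_of_false hS hT
    have htail : ∀ i, k + 1 ≤ i → i < k + 1 + xs.length → (i ∈ S ↔ i ∈ T) := by
      by_cases hS : k ∈ S
      · rw [mergeGaps, mergeGaps, if_pos hS, if_pos (hk.1 hS), List.cons.injEq] at h
        exact ih hxs' h.2
      · rw [mergeGaps, mergeGaps, if_neg hS, if_neg (hk.not.1 hS)] at h
        exact ih hxs' h
    intro i hki hi
    rcases hki.eq_or_lt with rfl | hki
    · exact hk
    · exact htail i hki (by simp only [List.length_cons] at hi; omega)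

end LeftCancelMonoid

section Finset

variable {α β : Type*}

def OrderIso.finsetCongr (e : α ≃ β) : Finset α ≃o Finset β where
  toEquiv := e.finsetCongr
  map_rel_iff' := by simp [Equiv.finsetCongr_apply]

variable [DecidableEq α] {s t : Finset α}

def Finset.IccOrderIso (hst : s ⊆ t) : Set.Icc s t ≃o Finset ↥(t \ s) where
  toFun u := u.1.subtype (· ∈ t \ s)
  invFun v := ⟨s ∪ v.map (Function.Embedding.subtype _), Finset.subset_union_left,
    Finset.union_subset hst fun i hi => by
      obtain ⟨j, -, rfl⟩ := Finset.mem_map.1 hi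
      exact (Finset.mem_sdiff.1 j.2).1⟩
  left_inv u := by
    ext i
    by_cases hs : i ∈ s
    · simp [hs, u.2.1 hs]
    · simpa [hs] using @u.2.2 i
  right_inv v := by
    ext i
    simp [(Finset.mem_sdiff.1 i.2).2]
  map_rel_iff' := by
    intro u v
    refine ⟨fun h i hi => ?_, fun h => Finset.subtype_mono h⟩
    by_cases hs : i ∈ s
    · exact v.2.1 hs
    · simpa using @h ⟨i, Finset.mem_sdiff.2 ⟨u.2.2 hi, hs⟩⟩ (by simpa using hi)

theorem Finset.exists_orderIso_Icc (hst : s ⊆ t) :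
    ∃ m : ℕ, Nonempty (Set.Icc s t ≃o Finset (Fin m)) :=
  ⟨_, ⟨(Finset.IccOrderIso hst).trans (OrderIso.finsetCongr (Fintype.equivFin _))⟩⟩

end Finset

section WordLength

variable {G : Type*} [Group G] {X : Set G}

theorem wlen_le_length {l : List G} (hl : ∀ x ∈ l, x ∈ X) : wlen X l.prod ≤ l.length :=
  Nat.sInf_le ⟨l, rfl, hl, rfl⟩

theorem exists_list_length_eq_wlen {g : G} (hg : g ∈ Submonoid.closure X) :
    ∃ l : List G, (∀ x ∈ l, x ∈ X) ∧ l.prod = g ∧ l.length = wlen X g := by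
  obtain ⟨l, hl, rfl⟩ := Submonoid.exists_list_of_mem_closure hg
  obtain ⟨l', hlen, hl', hprod⟩ :=
    Nat.sInf_mem (s := {n | ∃ l' : List G, l'.length = n ∧ (∀ x ∈ l', x ∈ X) ∧ l'.prod = l.prod})
      ⟨l.length, l, rfl, hl, rfl⟩
  exact ⟨l', hl', hprod, hlen⟩

theorem wlen_one : wlen X (1 : G) = 0 :=
  Nat.le_zero.1 (wlen_le_length (l := []) (by simp))

theorem wlen_eq_zero_iff {g : G} (hg : g ∈ Submonoid.closure X) : wlen X g = 0 ↔ g = 1 := by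
  refine ⟨fun h => ?_, fun h => h ▸ wlen_one⟩
  obtain ⟨l, -, rfl, hlen⟩ := exists_list_length_eq_wlen hg
  rw [h, List.length_eq_zero_iff] at hlen
  simp [hlen]

theorem wlen_mul_le {a b : G} (ha : a ∈ Submonoid.closure X) (hb : b ∈ Submonoid.closure X) :
    wlen X (a * b) ≤ wlen X a + wlen X b := by
  obtain ⟨l₁, hl₁, rfl, hlen₁⟩ := exists_list_length_eq_wlen ha
  obtain ⟨l₂, hl₂, rfl, hlen₂⟩ := exists_list_length_eq_wlen hb
  rw [← hlen₁, ← hlen₂, ← List.length_append, ← List.prod_append]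
  exact wlen_le_length fun x hx => (List.mem_append.1 hx).elim (hl₁ x) (hl₂ x)

theorem wlen_prod_le {l : List G} (hl : ∀ a ∈ l, a ∈ Submonoid.closure X) :
    wlen X l.prod ≤ (l.map (wlen X)).sum := by
  induction l with
  | nil => simp [wlen_one]
  | cons a l ih =>
    simp only [List.forall_mem_cons] at hl
    simp only [List.prod_cons, List.map_cons, List.sum_cons]
    exact (wlen_mul_le hl.1 (list_prod_mem hl.2)).trans (by have := ih hl.2; omega)

def IsGeodesic (X : Set G) (l : List G) : Prop :=
  (∀ a ∈ l, a ∈ Submonoid.closure X) ∧ (l.map (wlen X)).sum = wlen X l.prod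

theorem IsGeodesic.append {l₁ l₂ : List G} (h : IsGeodesic X (l₁ ++ l₂)) :
    IsGeodesic X l₁ ∧ IsGeodesic X l₂ := by
  obtain ⟨hmem, hsum⟩ := h
  simp only [List.mem_append] at hmem
  have h₁ : ∀ a ∈ l₁, a ∈ Submonoid.closure X := fun a ha => hmem a (.inl ha)
  have h₂ : ∀ a ∈ l₂, a ∈ Submonoid.closure X := fun a ha => hmem a (.inr ha)
  have := wlen_prod_le h₁
  have := wlen_prod_le h₂
  have := wlen_mul_le (list_prod_mem h₁) (list_prod_mem h₂)
  simp only [List.map_append, List.sum_append, List.prod_append] at hsum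
  exact ⟨⟨h₁, by omega⟩, ⟨h₂, by omega⟩⟩

theorem IsGeodesic.infix {l v : List G} (h : IsGeodesic X l) (hv : v <:+: l) : IsGeodesic X v := by
  obtain ⟨s, t, rfl⟩ := hv
  exact h.append.1.append.2

theorem IsGeodesic.prod_ne_one {l : List G} (h : IsGeodesic X l) {a : G} (ha : a ∈ l)
    (ha1 : a ≠ 1) : l.prod ≠ 1 := by
  intro hl
  have hpos : wlen X a ≠ 0 := (wlen_eq_zero_iff (h.1 a ha)).not.2 ha1
  have : wlen X a ≤ (l.map (wlen X)).sum := List.le_sum_of_mem (List.mem_map_of_mem ha)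
  rw [h.2, hl, wlen_one] at this
  omega

theorem IsGeodesic.of_listMergeStep {v w : List G} (hw : IsGeodesic X w)
    (h : ListMergeStep v w) : IsGeodesic X v := by
  obtain ⟨u, a, b, t, rfl, rfl⟩ := h
  have hab := (hw.infix (v := [a, b]) (by simpa using List.infix_append u [a, b] t)).2
  refine ⟨fun c hc => ?_, ?_⟩
  · simp only [List.mem_append, List.mem_cons] at hc
    rcases hc with hc | rfl | hc
    · exact hw.1 c (by simp [hc])
    · exact mul_mem (hw.1 a (by simp)) (hw.1 b (by simp))
    · exact hw.1 c (by simp [hc])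
  · have := hw.2
    simp only [List.map_append, List.map_cons, List.sum_append, List.sum_cons, List.prod_append,
      List.prod_cons, List.map_nil, List.sum_nil, List.prod_nil, mul_one, mul_assoc]
      at this hab ⊢
    omega

end WordLength

section Flat

variable {α : Type*}

def flat (p : α × List α × α) : List α := p.1 :: (p.2.1 ++ [p.2.2])

theorem flat_length (p : α × List α × α) : (flat p).length = p.2.1.length + 2 := by
  simp [flat]

variable [One α]

/-- Inverse of `flat` on lists of length at least `2`. -/
def unflat (l : List α) : α × List α × α := (l.headD 1, l.tail.dropLast, l.getLastD 1)

theorem unflat_flat (p : α × List α × α) : unflat (flat p) = p := by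
  simp [flat, unflat, List.getLastD_eq_getLast?, List.getLast?_cons]

theorem flat_unflat {l : List α} (hl : 2 ≤ l.length) : flat (unflat l) = l := by
  obtain _ | ⟨a, _ | ⟨b, l⟩⟩ := l
  · simp at hl
  · simp at hl
  · obtain ⟨l', c, hl'⟩ := (List.eq_nil_or_concat' (b :: l)).resolve_left (List.cons_ne_nil b l)
    simp [flat, unflat, hl', List.getLastD_eq_getLast?, List.getLast?_cons]

end Flat

section Factorizations

variable {G : Type*} [Group G] {X : Set G} {g : G}

theorem MergeStep.listMergeStep_flat {p q : G × List G × G} (h : MergeStep p q) :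
    ListMergeStep (flat p) (flat q) := by
  cases h with
  | left xL a l xR => exact ⟨[], xL, a, l ++ [xR], rfl, rfl⟩
  | mid xL l₁ a b l₂ xR => exact ⟨xL :: l₁, a, b, l₂ ++ [xR], by simp [flat], by simp [flat]⟩
  | right xL l a xR => exact ⟨xL :: l, a, xR, [], by simp [flat], by simp [flat]⟩

theorem ListMergeStep.mergeStep_unflat {v w : List G} (h : ListMergeStep v w)
    (hv : 2 ≤ v.length) : MergeStep (unflat v) (unflat w) := by
  obtain ⟨u, a, b, t, rfl, rfl⟩ := h
  rcases u with _ | ⟨c, u⟩ <;> rcases t.eq_nil_or_concat' with rfl | ⟨t, r, rfl⟩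
  · simp at hv
  · simpa [unflat, List.getLastD_eq_getLast?, List.getLast?_cons,
      List.dropLast_cons_of_ne_nil] using MergeStep.left a b t r
  · simpa [unflat, List.getLastD_eq_getLast?, List.getLast?_cons,
      List.dropLast_cons_of_ne_nil] using MergeStep.right c u a b
  · simpa [unflat, List.getLastD_eq_getLast?, List.getLast?_cons,
      List.dropLast_cons_of_ne_nil] using MergeStep.mid c u a b t r

theorem reflTransGen_mergeStep_iff {p q : G × List G × G} :
    Relation.ReflTransGen MergeStep p q ↔
      Relation.ReflTransGen ListMergeStep (flat p) (flat q) := by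
  refine ⟨fun h => h.lift flat fun _ _ => MergeStep.listMergeStep_flat, fun h => ?_⟩
  suffices ∀ v, Relation.ReflTransGen ListMergeStep v (flat q) → 2 ≤ v.length →
      Relation.ReflTransGen MergeStep (unflat v) q by
    simpa [unflat_flat] using this _ h (by simp [flat_length])
  intro v hvq
  induction hvq using Relation.ReflTransGen.head_induction_on with
  | refl => exact fun _ => by rw [unflat_flat]
  | head hstep _ ih =>
    exact fun hv => .head (hstep.mergeStep_unflat hv) (ih (by have := hstep.length_eq; omega))

theorem isLinFact_iff {p : G × List G × G} :
    IsLinFact X g p ↔ IsGeodesic X (flat p) ∧ (flat p).prod = g ∧ ∀ a ∈ p.2.1, a ≠ 1 := by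
  obtain ⟨L, l, R⟩ := p
  simp only [IsLinFact, IsGeodesic, flat, List.forall_mem_cons, List.forall_mem_append,
    List.map_cons, List.map_append, List.sum_cons, List.sum_append,
    List.prod_cons, List.prod_append, List.map_nil, List.sum_nil, List.prod_nil, mul_one, mul_assoc,
    add_zero]
  constructor
  · rintro ⟨hL, hR, hl, rfl, hsum⟩
    exact ⟨⟨⟨hL, fun a ha => (hl a ha).1, hR, by simp⟩, by omega⟩, rfl, fun a ha => (hl a ha).2⟩
  · rintro ⟨⟨⟨hL, hl, hR, -⟩, hsum⟩, rfl, hne⟩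
    exact ⟨hL, hR, fun a ha => ⟨hl a ha, hne a ha⟩, rfl, by omega⟩

theorem IsLinFact.of_mergeStep {p q : G × List G × G} (hq : IsLinFact X g q)
    (h : MergeStep p q) : IsLinFact X g p := by
  rw [isLinFact_iff] at hq ⊢
  obtain ⟨hgeo, hprod, hne⟩ := hq
  have hstep := h.listMergeStep_flat
  refine ⟨hgeo.of_listMergeStep hstep, hstep.prod_eq.trans hprod, ?_⟩
  cases h with
  | left xL a l xR => exact fun c hc => hne c (List.mem_cons_of_mem a hc)
  | right xL l a xR => exact fun c hc => hne c (List.mem_append_left _ hc)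
  | mid xL l₁ a b l₂ xR =>
    have hab : [a, b] <:+: flat (xL, l₁ ++ a :: b :: l₂, xR) :=
      ⟨xL :: l₁, l₂ ++ [xR], by simp [flat]⟩
    simp only [List.mem_append, List.mem_cons] at hne ⊢
    rintro c (hc | rfl | hc)
    · exact hne c (.inl hc)
    · simpa using (hgeo.infix hab).prod_ne_one (List.mem_cons_self) (hne a (by simp))
    · exact hne c (.inr (.inr (.inr hc)))

theorem IsLinFact.of_reflTransGen {p q : G × List G × G} (hq : IsLinFact X g q)
    (h : Relation.ReflTransGen MergeStep p q) : IsLinFact X g p := by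
  induction h using Relation.ReflTransGen.head_induction_on with
  | refl => exact hq
  | head hstep _ ih => exact ih.of_mergeStep hstep

end Factorizations

section Gaps

variable {G : Type*} [Group G] {X : Set G} {g : G} {S T : Finset ℕ}

/-- The flat list of `q` with only the gaps in `S` left open; gap `i` precedes the `i`-th
middle factor, and gap `q.2.1.length` precedes the right factor. -/
def flatOfGaps (q : G × List G × G) (S : Finset ℕ) : List G :=
  mergeGaps S 0 q.1 (q.2.1 ++ [q.2.2])

theorem flatOfGaps_range (q : G × List G × G) :
    flatOfGaps q (Finset.range (q.2.1.length + 1)) = flat q :=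
  mergeGaps_of_forall_mem (fun i _ hi => Finset.mem_range.2 (by simpa using hi)) _

theorem flatOfGaps_mono (q : G × List G × G) (hST : S ⊆ T) :
    Relation.ReflTransGen ListMergeStep (flatOfGaps q S) (flatOfGaps q T) :=
  mergeGaps_mono hST _ _ _

theorem exists_flat_eq_flatOfGaps {p q : G × List G × G}
    (h : Relation.ReflTransGen MergeStep p q) :
    ∃ S ⊆ Finset.range (q.2.1.length + 1), flat p = flatOfGaps q S := by
  rw [reflTransGen_mergeStep_iff, ← flatOfGaps_range q] at h
  exact exists_subset_of_reflTransGen_mergeGaps h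

theorem IsLinFact.prod_ne_one {q : G × List G × G} (hq : IsLinFact X g q) {v : List G}
    (hv : v ≠ []) (hvq : v <:+: q.2.1) : v.prod ≠ 1 := by
  obtain ⟨hgeo, -, hne⟩ := isLinFact_iff.1 hq
  obtain ⟨a, ha⟩ := List.exists_mem_of_ne_nil v hv
  have hmid : q.2.1 <:+: flat q := ⟨[q.1], [q.2.2], by simp [flat]⟩
  exact (hgeo.infix (hvq.trans hmid)).prod_ne_one ha (hne a (hvq.subset ha))

theorem IsLinFact.flatOfGaps_inj {q : G × List G × G} (hq : IsLinFact X g q)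
    (hS : S ⊆ Finset.range (q.2.1.length + 1)) (hT : T ⊆ Finset.range (q.2.1.length + 1))
    (h : flatOfGaps q S = flatOfGaps q T) : S = T := by
  have hgaps := mem_iff_mem_of_mergeGaps_eq
    (fun v hv hvq => hq.prod_ne_one hv (by rwa [List.dropLast_concat] at hvq)) h
  ext i
  by_cases hi : i < q.2.1.length + 1
  · exact hgaps i (Nat.zero_le i) (by simpa using hi)
  · exact iff_of_false (fun h' => hi (Finset.mem_range.1 (hS h')))
      (fun h' => hi (Finset.mem_range.1 (hT h')))

theorem IsLinFact.reflTransGen_flatOfGaps_iff {q : G × List G × G} (hq : IsLinFact X g q)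
    (hS : S ⊆ Finset.range (q.2.1.length + 1)) (hT : T ⊆ Finset.range (q.2.1.length + 1)) :
    Relation.ReflTransGen ListMergeStep (flatOfGaps q S) (flatOfGaps q T) ↔ S ⊆ T := by
  refine ⟨fun h => ?_, flatOfGaps_mono q⟩
  obtain ⟨S', hS'T, hS'⟩ := exists_subset_of_reflTransGen_mergeGaps h
  rwa [hq.flatOfGaps_inj hS (hS'T.trans hT) hS']

theorem nonempty_orderIso_Icc_of_flat_eq_flatOfGaps {x y : FactI X g} {Sx : Finset ℕ}
    (hSx : Sx ⊆ Finset.range (y.1.2.1.length + 1)) (hx : flat x.1 = flatOfGaps y.1 Sx) :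
    Nonempty (Set.Icc Sx (Finset.range (y.1.2.1.length + 1)) ≃o
      {z : FactI X g // x ≤ z ∧ z ≤ y}) := by
  set I := Set.Icc Sx (Finset.range (y.1.2.1.length + 1))
  have hflat : ∀ S : I, flat (unflat (flatOfGaps y.1 S)) = flatOfGaps y.1 S := by
    intro S
    refine flat_unflat ?_
    have := (flatOfGaps_mono y.1 S.2.1).length_le_of_listMergeStep
    rw [← hx, flat_length] at this
    omega
  have hle : ∀ S : I, Relation.ReflTransGen MergeStep (unflat (flatOfGaps y.1 S)) y.1 := by
    intro S
    rw [reflTransGen_mergeStep_iff, hflat, ← flatOfGaps_range]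
    exact flatOfGaps_mono y.1 S.2.2
  have hge : ∀ S : I, Relation.ReflTransGen MergeStep x.1 (unflat (flatOfGaps y.1 S)) := by
    intro S
    rw [reflTransGen_mergeStep_iff, hflat, hx]
    exact flatOfGaps_mono y.1 S.2.1
  let f : I → {z : FactI X g // x ≤ z ∧ z ≤ y} :=
    fun S => ⟨⟨unflat (flatOfGaps y.1 S), y.2.of_reflTransGen (hle S)⟩, hge S, hle S⟩
  have hf : ∀ S T, f S ≤ f T ↔ S ≤ T := fun S T =>
    (reflTransGen_mergeStep_iff.trans (by rw [hflat, hflat])).trans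
      (y.2.reflTransGen_flatOfGaps_iff S.2.2 T.2.2)
  have hinj : Function.Injective f := fun S T h =>
    le_antisymm ((hf S T).1 (h ▸ .refl)) ((hf T S).1 (h ▸ .refl))
  have hsurj : Function.Surjective f := by
    rintro ⟨z, hxz, hzy⟩
    obtain ⟨Sz, hSz, hz⟩ := exists_flat_eq_flatOfGaps hzy
    have hxz' := reflTransGen_mergeStep_iff.1 hxz
    rw [hx, hz, y.2.reflTransGen_flatOfGaps_iff hSx hSz] at hxz'
    exact ⟨⟨Sz, hxz', hSz⟩, Subtype.ext (Subtype.ext (by simp [f, ← hz, unflat_flat]))⟩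
  exact ⟨{ Equiv.ofBijective f ⟨hinj, hsurj⟩ with map_rel_iff' := hf _ _ }⟩

end Gaps

theorem stmt5_general {G : Type*} [Group G] (X : Set G)
    (g : G)
    (x y : FactI X g) (hxy : x ≤ y) :
    ∃ m : ℕ, Nonempty ({z : FactI X g // x ≤ z ∧ z ≤ y} ≃o Finset (Fin m)) := by
  obtain ⟨Sx, hSx, hx⟩ := exists_flat_eq_flatOfGaps hxy
  obtain ⟨e⟩ := nonempty_orderIso_Icc_of_flat_eq_flatOfGaps hSx hx
  obtain ⟨m, ⟨e'⟩⟩ := Finset.exists_orderIso_Icc hSx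
  exact ⟨m, ⟨e.symm.trans e'⟩⟩

/-- every interval `[x,y]` of `Fact(G,g,I)` is order-isomorphic to the poset of
all subsets of some finite set, ordered by inclusion (a Boolean lattice). -/
theorem stmt5 {G : Type*} [Group G] (X : Set G)
    (hX : ∀ g x, x ∈ X → g * x * g⁻¹ ∈ X)
    (g : G) (hg : g ∈ Submonoid.closure X)
    (x y : FactI X g) (hxy : x ≤ y) :
    ∃ m : ℕ, Nonempty ({z : FactI X g // x ≤ z ∧ z ≤ y} ≃o Finset (Fin m)) :=
  stmt5_general X g x y hxy
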